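/- arXiv:1703.09121 — 4 statements merged into one kernel-verified Lean document; each statement's English description precedes it below -/
import Mathlib

section
/- Let R be a Noetherian ring and I an ideal generated by a regular sequence a_1, ..., a_μ. Then the natural (R/I)-algebra homomorphism from the polynomial ring (R/I)[X_1,...,X_μ] to the associated graded ring ⊕_{m≥0} I^m/I^{m+1}, sending X_i to the class of a_i in I/I^2, is an isomorphism. -/
/-!
Write `J` for the ideal generated by `v = (v_1, …, v_k)`. Every element of `J^m` is the value at
`v` of a form of degree `m`, so the content of the theorem is injectivity, i.e. quasi-regularity
of `v`: a form of degree `m` whose value lies in `J^{m+1}` has all its coefficients in `J`. Since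
`J^{m+1}` consists of the values of the forms of degree `m` with coefficients in `J`, it suffices
to treat forms vanishing at `v`.

We induct on `k` and then on `m`. Let `b = v_k`, let `v'` be the first `k - 1` elements and `J'`
the ideal they generate, and write a form `F` of degree `m + 1` with `F(v) = 0` as
`X_k * H + G(X_1, …, X_{k-1})`. As `v'` is quasi-regular and `b` is regular modulo `J'`, an
induction on `n` shows that `b` is regular modulo every `J'^n`; hence `b * H(v) = -G(v')` forces
`H(v) ∈ J'^{m+1}`. The induction on the degree puts the coefficients of `H` in `J`. Writing
`H(v) = K(v')` with `K` a form of degree `m + 1`, quasi-regularity of `v'` applied to `G + b K`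
puts the coefficients of `G` in `J`.
-/

open MvPolynomial RingTheory.Sequence

namespace MvPolynomial

variable {σ τ R : Type*} [CommRing R]

lemma mem_span_range_pow_iff_exists_aeval (v : σ → R) (m : ℕ) (x : R) :
    x ∈ Ideal.span (Set.range v) ^ m ↔
      ∃ F : MvPolynomial σ R, F.IsHomogeneous m ∧ aeval v F = x := by
  simp [Ideal.mem_span_pow_iff_exists_isHomogeneous]

lemma IsHomogeneous.aeval_mem_pow {v : σ → R} {m : ℕ} {F : MvPolynomial σ R}
    (hF : F.IsHomogeneous m) : MvPolynomial.aeval v F ∈ Ideal.span (Set.range v) ^ m :=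
  (mem_span_range_pow_iff_exists_aeval v m _).mpr ⟨F, hF, rfl⟩

lemma IsHomogeneous.aeval_mem_pow_succ {v : σ → R} {m : ℕ} {F : MvPolynomial σ R}
    (hF : F.IsHomogeneous m) (hFJ : F ∈ Ideal.map C (Ideal.span (Set.range v))) :
    MvPolynomial.aeval v F ∈ Ideal.span (Set.range v) ^ (m + 1) := by
  classical
  rw [F.as_sum, map_sum, pow_succ']
  refine Ideal.sum_mem _ fun d hd => ?_
  have hmono : (monomial d (1 : R)).IsHomogeneous m := by
    refine isHomogeneous_monomial _ ?_
    rw [Finsupp.degree_eq_weight_one]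
    exact hF (mem_support_iff.mp hd)
  rw [← mul_one (coeff d F), ← C_mul_monomial, map_mul, aeval_C, Algebra.algebraMap_self,
    RingHom.id_apply]
  exact Ideal.mul_mem_mul (mem_map_C_iff.mp hFJ d) hmono.aeval_mem_pow

lemma exists_isHomogeneous_mem_map_C_aeval_eq {v : σ → R} {m : ℕ} {x : R}
    (hx : x ∈ Ideal.span (Set.range v) ^ (m + 1)) :
    ∃ F : MvPolynomial σ R, F.IsHomogeneous m ∧
      F ∈ Ideal.map C (Ideal.span (Set.range v)) ∧ aeval v F = x := by
  rw [pow_succ'] at hx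
  refine Submodule.mul_induction_on hx (fun a ha y hy => ?_) ?_
  · obtain ⟨G, hG, rfl⟩ := (mem_span_range_pow_iff_exists_aeval v m y).mp hy
    exact ⟨C a * G, hG.C_mul a, Ideal.mul_mem_right _ _ (Ideal.mem_map_of_mem C ha),
      by simp⟩
  · rintro _ _ ⟨F₁, h₁, hJ₁, rfl⟩ ⟨F₂, h₂, hJ₂, rfl⟩
    exact ⟨F₁ + F₂, h₁.add h₂, add_mem hJ₁ hJ₂, map_add _ _ _⟩

section GradedAlgebra

attribute [local instance] MvPolynomial.gradedAlgebra

lemma homogeneousComponent_X_mul (i : σ) (m : ℕ) (H : MvPolynomial σ R) :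
    homogeneousComponent (m + 1) (X i * H) = X i * homogeneousComponent m H := by
  rw [← decomposition.decompose'_apply, ← decomposition.decompose'_apply]
  have h := DirectSum.coe_decompose_mul_of_left_mem_of_le (homogeneousSubmodule σ R) (b := H)
    (isHomogeneous_X R i) (Nat.le_add_left 1 m)
  rwa [Nat.add_sub_cancel] at h

end GradedAlgebra

lemma exists_eq_X_last_mul_add_rename {n : ℕ} (F : MvPolynomial (Fin (n + 1)) R) :
    ∃ (H : MvPolynomial (Fin (n + 1)) R) (G : MvPolynomial (Fin n) R),
      F = X (Fin.last n) * H + rename Fin.castSucc G := by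
  induction F using MvPolynomial.induction_on with
  | C a => exact ⟨0, C a, by simp⟩
  | add p q hp hq =>
    obtain ⟨H₁, G₁, rfl⟩ := hp
    obtain ⟨H₂, G₂, rfl⟩ := hq
    exact ⟨H₁ + H₂, G₁ + G₂, by rw [map_add]; ring⟩
  | mul_X p i hp =>
    obtain ⟨H, G, rfl⟩ := hp
    induction i using Fin.lastCases with
    | last => exact ⟨H * X (Fin.last n) + rename Fin.castSucc G, 0, by simp; ring⟩
    | cast j => exact ⟨H * X j.castSucc, G * X j, by simp; ring⟩

lemma IsHomogeneous.exists_eq_X_last_mul_add_rename {n m : ℕ}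
    {F : MvPolynomial (Fin (n + 1)) R} (hF : F.IsHomogeneous (m + 1)) :
    ∃ (H : MvPolynomial (Fin (n + 1)) R) (G : MvPolynomial (Fin n) R),
      H.IsHomogeneous m ∧ G.IsHomogeneous (m + 1) ∧
        F = X (Fin.last n) * H + rename Fin.castSucc G := by
  obtain ⟨H, G, hFHG⟩ := MvPolynomial.exists_eq_X_last_mul_add_rename F
  refine ⟨homogeneousComponent m H, homogeneousComponent (m + 1) G,
    homogeneousComponent_isHomogeneous m H, homogeneousComponent_isHomogeneous (m + 1) G, ?_⟩
  rw [← homogeneousComponent_eq_self hF, hFHG, map_add, homogeneousComponent_X_mul,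
    rename_homogeneousComponent]

lemma rename_mem_map_C {f : σ → τ} {I : Ideal R} {p : MvPolynomial σ R}
    (hp : p ∈ Ideal.map C I) : rename f p ∈ Ideal.map C I := by
  have h := Ideal.mem_map_of_mem (rename f).toRingHom hp
  rwa [Ideal.map_map, show (rename f).toRingHom.comp C = C from RingHom.ext (rename_C f)] at h

lemma mem_map_C_of_aeval_mem_pow_succ {v : σ → R} {m : ℕ}
    (h0 : ∀ F : MvPolynomial σ R, F.IsHomogeneous m → aeval v F = 0 →
      F ∈ Ideal.map C (Ideal.span (Set.range v)))
    {F : MvPolynomial σ R} (hF : F.IsHomogeneous m)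
    (hFv : aeval v F ∈ Ideal.span (Set.range v) ^ (m + 1)) :
    F ∈ Ideal.map C (Ideal.span (Set.range v)) := by
  obtain ⟨D, hD, hDJ, hDv⟩ := exists_isHomogeneous_mem_map_C_aeval_eq hFv
  have hFD := h0 (F - D) (hF.sub hD) (by rw [map_sub, hDv, sub_self])
  simpa using add_mem hFD hDJ

end MvPolynomial

lemma Ideal.ofList_ofFn {R : Type*} [CommRing R] {k : ℕ} (v : Fin k → R) :
    Ideal.ofList (List.ofFn v) = Ideal.span (Set.range v) :=
  congrArg Ideal.span (Set.ext fun x => List.mem_ofFn' v x)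

namespace RingTheory.Sequence

variable {σ R : Type*} [CommRing R]

/-- Degreewise injectivity of `(R/J)[X] → gr_J R`, `X_i ↦ v_i mod J^2`, for `J` generated by `v`;
`Ideal.map C J` is the kernel of `R[X] → (R/J)[X]`. -/
def IsQuasiRegular (v : σ → R) : Prop :=
  ∀ (m : ℕ) (F : MvPolynomial σ R), F.IsHomogeneous m →
    aeval v F ∈ Ideal.span (Set.range v) ^ (m + 1) → F ∈ Ideal.map C (Ideal.span (Set.range v))

lemma isQuasiRegular_of_isEmpty [IsEmpty σ] (v : σ → R) : IsQuasiRegular v := by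
  intro m F _ hFv
  obtain ⟨c, rfl⟩ := C_surjective σ F
  rw [aeval_C, Algebra.algebraMap_self, RingHom.id_apply] at hFv
  exact Ideal.mem_map_of_mem C (Ideal.pow_le_self m.succ_ne_zero hFv)

lemma IsQuasiRegular.isSMulRegular_quotient_pow {v : σ → R} (hv : IsQuasiRegular v) {b : R}
    (hb : IsSMulRegular (R ⧸ Ideal.span (Set.range v)) b) (m : ℕ) :
    IsSMulRegular (R ⧸ Ideal.span (Set.range v) ^ m) b := by
  rw [isSMulRegular_quotient_iff_mem_of_smul_mem] at hb ⊢
  induction m with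
  | zero => simp
  | succ m ih =>
    intro x hx
    obtain ⟨F, hF, rfl⟩ := (mem_span_range_pow_iff_exists_aeval v m x).mp
      (ih x (Ideal.pow_le_pow_right m.le_succ hx))
    have hbF := hv m _ (hF.C_mul b) (by simpa using hx)
    refine hF.aeval_mem_pow_succ (mem_map_C_iff.mpr fun d => hb _ ?_)
    simpa [coeff_C_mul] using mem_map_C_iff.mp hbF d

lemma IsQuasiRegular.mem_map_C_of_aeval_eq_zero {n m : ℕ} {v : Fin (n + 1) → R}
    (hv : IsQuasiRegular (v ∘ Fin.castSucc))
    (hb : IsSMulRegular (R ⧸ Ideal.span (Set.range (v ∘ Fin.castSucc))) (v (Fin.last n)))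
    (ih : ∀ H : MvPolynomial (Fin (n + 1)) R, H.IsHomogeneous m →
      aeval v H ∈ Ideal.span (Set.range v) ^ (m + 1) →
        H ∈ Ideal.map C (Ideal.span (Set.range v)))
    {F : MvPolynomial (Fin (n + 1)) R} (hF : F.IsHomogeneous (m + 1)) (hF0 : aeval v F = 0) :
    F ∈ Ideal.map C (Ideal.span (Set.range v)) := by
  set b := v (Fin.last n)
  have hJ'J : Ideal.span (Set.range (v ∘ Fin.castSucc)) ≤ Ideal.span (Set.range v) :=
    Ideal.span_mono (Set.range_comp_subset_range _ _)
  have hbJ : (C b : MvPolynomial (Fin n) R) ∈ Ideal.map C (Ideal.span (Set.range v)) :=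
    Ideal.mem_map_of_mem C (Ideal.subset_span ⟨_, rfl⟩)
  obtain ⟨H, G, hH, hG, rfl⟩ := hF.exists_eq_X_last_mul_add_rename
  have hsum : aeval (v ∘ Fin.castSucc) G + b * aeval v H = 0 := by
    rw [map_add, map_mul, aeval_X, aeval_rename] at hF0
    exact (add_comm _ _).trans hF0
  have hHv : aeval v H ∈ Ideal.span (Set.range (v ∘ Fin.castSucc)) ^ (m + 1) := by
    refine (isSMulRegular_quotient_iff_mem_of_smul_mem _ _).mp
      (hv.isSMulRegular_quotient_pow hb (m + 1)) _ ?_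
    rw [smul_eq_mul, eq_neg_of_add_eq_zero_right hsum]
    exact neg_mem hG.aeval_mem_pow
  obtain ⟨K, hK, hKv⟩ := (mem_span_range_pow_iff_exists_aeval _ _ _).mp hHv
  have hGK := hv (m + 1) (G + C b * K) (hG.add (hK.C_mul b)) (by
    rw [map_add, map_mul, aeval_C, hKv, Algebra.algebraMap_self, RingHom.id_apply, hsum]
    exact zero_mem _)
  have hGJ : G ∈ Ideal.map C (Ideal.span (Set.range v)) := by
    simpa using sub_mem (Ideal.map_mono hJ'J hGK) (Ideal.mul_mem_right K _ hbJ)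
  exact add_mem (Ideal.mul_mem_left _ _ (ih H hH (Ideal.pow_right_mono hJ'J _ hHv)))
    (rename_mem_map_C hGJ)

lemma IsQuasiRegular.of_castSucc {n : ℕ} {v : Fin (n + 1) → R}
    (hv : IsQuasiRegular (v ∘ Fin.castSucc))
    (hb : IsSMulRegular (R ⧸ Ideal.span (Set.range (v ∘ Fin.castSucc))) (v (Fin.last n))) :
    IsQuasiRegular v := by
  intro m
  induction m with
  | zero =>
    intro F hF hFv
    rw [← homogeneousComponent_eq_self hF, homogeneousComponent_zero] at hFv ⊢
    exact Ideal.mem_map_of_mem C (by simpa using hFv)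
  | succ m ih =>
    exact fun F hF => mem_map_C_of_aeval_mem_pow_succ
      (fun _ hF' hF'0 => hv.mem_map_C_of_aeval_eq_zero hb ih hF' hF'0) hF

theorem isQuasiRegular_of_isWeaklyRegular :
    ∀ {k : ℕ} {v : Fin k → R}, IsWeaklyRegular R (List.ofFn v) → IsQuasiRegular v
  | 0, v, _ => isQuasiRegular_of_isEmpty v
  | n + 1, v, hreg => by
    rw [List.ofFn_succ', List.concat_eq_append, isWeaklyRegular_append_iff,
      isWeaklyRegular_singleton_iff, smul_eq_mul, Ideal.mul_top, Ideal.ofList_ofFn] at hreg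
    exact .of_castSucc (isQuasiRegular_of_isWeaklyRegular hreg.1) hreg.2

end RingTheory.Sequence

theorem stmt2_general {R : Type*} [CommRing R]
    (as : List R) (hreg : RingTheory.Sequence.IsRegular R as)
    (I : Ideal R) (hI : I = Ideal.ofList as) :
    ∀ m : ℕ,
      -- surjectivity onto `I^m/I^{m+1}` (indeed onto `I^m`)
      (∀ x ∈ I ^ m, ∃ F : MvPolynomial (Fin as.length) R,
        F.IsHomogeneous m ∧ MvPolynomial.aeval (fun i => as.get i) F = x) ∧
      -- injectivity: the kernel of the evaluation map modulo `I^{m+1}` consists of the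
      -- homogeneous polynomials with all coefficients in `I`
      (∀ F : MvPolynomial (Fin as.length) R, F.IsHomogeneous m →
        MvPolynomial.aeval (fun i => as.get i) F ∈ I ^ (m + 1) →
        ∀ d, MvPolynomial.coeff d F ∈ I) := by
  intro m
  have hv : IsQuasiRegular (fun i => as.get i) :=
    isQuasiRegular_of_isWeaklyRegular (by rw [List.ofFn_get]; exact hreg.toIsWeaklyRegular)
  obtain rfl : I = Ideal.span (Set.range fun i => as.get i) := by
    rw [hI, ← Ideal.ofList_ofFn, List.ofFn_get]
  exact ⟨fun x hx => (mem_span_range_pow_iff_exists_aeval _ m x).mp hx,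
    fun F hF hFv => mem_map_C_iff.mp (hv m F hF hFv)⟩

theorem stmt2 {R : Type*} [CommRing R] [IsNoetherianRing R]
    (as : List R) (hreg : RingTheory.Sequence.IsRegular R as)
    (I : Ideal R) (hI : I = Ideal.ofList as) :
    ∀ m : ℕ,
      -- surjectivity onto `I^m/I^{m+1}` (indeed onto `I^m`)
      (∀ x ∈ I ^ m, ∃ F : MvPolynomial (Fin as.length) R,
        F.IsHomogeneous m ∧ MvPolynomial.aeval (fun i => as.get i) F = x) ∧
      -- injectivity: the kernel of the evaluation map modulo `I^{m+1}` consists of the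
      -- homogeneous polynomials with all coefficients in `I`
      (∀ F : MvPolynomial (Fin as.length) R, F.IsHomogeneous m →
        MvPolynomial.aeval (fun i => as.get i) F ∈ I ^ (m + 1) →
        ∀ d, MvPolynomial.coeff d F ∈ I) :=
  stmt2_general as hreg I hI
end

section
/- Let R be a Noetherian ring and I a prime ideal generated by a regular sequence. Then for every positive integer e, every associated prime of R/I^e equals I; in particular I^e is an I-primary ideal. -/
/-!
An element `x` regular modulo `I` stays regular modulo every power `I ^ m` as soon as the
generators `a` of `I` form a quasi-regular family: a homogeneous form `F` of degree `k` with
`F(a) ∈ I ^ (k + 1)` has all its coefficients in `I`. Indeed, writing `z ∈ I ^ m` as `F(a)` with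
`F` homogeneous of degree `m`, the relation `x z ∈ I ^ (m + 1)` puts the coefficients of `x F`,
hence of `F`, in `I`, so `z ∈ I ^ (m + 1)`.

Regular sequences are quasi-regular (Matsumura, Thm. 16.2), by induction on the length: split a
form as `X_last * Q + P(X_1, …, X_{n-1})`, use the regularity of the last element modulo the
powers of the ideal of the shorter sequence to control `Q`, and quasi-regularity of the shorter
sequence to control `P`.

For a prime `I`, every `y ∉ I` is regular modulo `I`, hence modulo `I ^ e`; so `I ^ e` is
`I`-primary, and its associated primes are its radical `I`.
-/

open MvPolynomial Ideal RingTheory.Sequence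

section QuasiRegular

variable {R : Type*} [CommRing R]

section Family

variable {σ : Type*} (a : σ → R)

theorem Ideal.mem_mul_span_pow_iff_exists_isHomogeneous (K : Ideal R) (k : ℕ) (z : R) :
    z ∈ K * span (Set.range a) ^ k ↔
      ∃ F : MvPolynomial σ R, F.IsHomogeneous k ∧ (∀ d, F.coeff d ∈ K) ∧ eval a F = z := by
  constructor
  · intro hz
    refine Submodule.mul_induction_on hz (fun x hx y hy => ?_) ?_
    · obtain ⟨G, hG, rfl⟩ := (mem_span_pow_iff_exists_isHomogeneous a y).mp hy
      exact ⟨C x * G, hG.C_mul x, fun d => by rw [coeff_C_mul]; exact K.mul_mem_right _ hx,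
        by simp⟩
    · rintro _ _ ⟨F, hF, hFK, rfl⟩ ⟨G, hG, hGK, rfl⟩
      exact ⟨F + G, hF.add hG, fun d => by rw [coeff_add]; exact add_mem (hFK d) (hGK d),
        map_add _ _ _⟩
  · rintro ⟨F, hF, hFK, rfl⟩
    rw [F.as_sum, map_sum]
    refine Ideal.sum_mem _ fun d hd => ?_
    have hdeg : d.degree = k := (hF.degree_eq_sum_deg_support hd).symm
    have hmon : eval a (monomial d (1 : R)) ∈ span (Set.range a) ^ k :=
      (mem_span_pow_iff_exists_isHomogeneous a _).mpr ⟨_, isHomogeneous_monomial 1 hdeg, rfl⟩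
    rw [show eval a (monomial d (F.coeff d)) = F.coeff d * eval a (monomial d 1) by
      simp [eval_monomial]]
    exact mul_mem_mul (hFK d) hmon

theorem coeff_mem_of_isHomogeneous_zero {F : MvPolynomial σ R} (hF : F.IsHomogeneous 0)
    {K : Ideal R} (h : eval a F ∈ K) (d : σ →₀ ℕ) : F.coeff d ∈ K := by
  classical
  rw [totalDegree_eq_zero_iff_eq_C.mp ((totalDegree_zero_iff_isHomogeneous σ).mpr hF)] at h ⊢
  rw [eval_C] at h
  rw [coeff_C]
  split_ifs
  exacts [h, zero_mem K]

theorem coeff_rename_mem {τ : Type*} (f : σ → τ) {K : Ideal R} {P : MvPolynomial σ R}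
    (hP : ∀ d, P.coeff d ∈ K) (d : τ →₀ ℕ) : (rename f P).coeff d ∈ K := by
  revert d
  rw [← MvPolynomial.mem_map_C_iff] at hP ⊢
  have hC : (rename f).toRingHom.comp C = (C : R →+* MvPolynomial τ R) := RingHom.ext (rename_C f)
  have := Ideal.mem_map_of_mem (rename f : MvPolynomial σ R →ₐ[R] _).toRingHom hP
  rwa [Ideal.map_map, hC] at this

def IsQuasiRegularFamily : Prop :=
  ∀ (k : ℕ) (F : MvPolynomial σ R), F.IsHomogeneous k →
    eval a F ∈ span (Set.range a) ^ (k + 1) → ∀ d, F.coeff d ∈ span (Set.range a)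

theorem isQuasiRegularFamily_of_isEmpty [IsEmpty σ] : IsQuasiRegularFamily a :=
  fun k F _ h => coeff_mem_of_isHomogeneous_zero a (isHomogeneous_of_isEmpty σ R F)
    (pow_le_self k.succ_ne_zero h)

variable {a}

theorem IsQuasiRegularFamily.isSMulRegular_quotient_pow (ha : IsQuasiRegularFamily a) {x : R}
    (hx : IsSMulRegular (R ⧸ span (Set.range a)) x) (m : ℕ) :
    IsSMulRegular (R ⧸ span (Set.range a) ^ m) x := by
  rw [isSMulRegular_quotient_iff_mem_of_smul_mem] at hx ⊢
  induction m with
  | zero => simp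
  | succ m ih =>
    intro z hz
    obtain ⟨F, hF, rfl⟩ := (mem_span_pow_iff_exists_isHomogeneous a z).mp
      (ih z (pow_le_pow_right m.le_succ hz))
    have hcoeff : ∀ d, F.coeff d ∈ span (Set.range a) := fun d => hx _ <| by
      simpa [coeff_C_mul] using ha m (C x * F) (hF.C_mul x) (by simpa using hz) d
    rw [pow_succ']
    exact (mem_mul_span_pow_iff_exists_isHomogeneous a _ m _).mpr ⟨F, hF, hcoeff, rfl⟩

end Family

section LastVariable

variable {n k : ℕ}

theorem exists_monomial_eq_X_last_mul_add_rename {d : Fin (n + 1) →₀ ℕ}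
    (hd : d.degree = k + 1) (c : R) :
    ∃ (Q : MvPolynomial (Fin (n + 1)) R) (P : MvPolynomial (Fin n) R),
      Q.IsHomogeneous k ∧ P.IsHomogeneous (k + 1) ∧
        monomial d c = X (Fin.last n) * Q + rename Fin.castSucc P := by
  by_cases hlast : d (Fin.last n) = 0
  · obtain ⟨e, rfl⟩ := (Finsupp.mem_range_mapDomain_iff _ (Fin.castSucc_injective n) d).mpr
      fun i hi => by rwa [not_not.mp (mt Fin.exists_castSucc_eq.mpr hi)]
    refine ⟨0, monomial e c, isHomogeneous_zero _ _ _,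
      isHomogeneous_monomial c (by rwa [Finsupp.degree_mapDomain] at hd), ?_⟩
    rw [mul_zero, zero_add, rename_monomial]
  · have hle : Finsupp.single (Fin.last n) 1 ≤ d :=
      Finsupp.single_le_iff.mpr (Nat.one_le_iff_ne_zero.mpr hlast)
    obtain ⟨e, rfl⟩ : ∃ e, d = Finsupp.single (Fin.last n) 1 + e :=
      ⟨_, (add_tsub_cancel_of_le hle).symm⟩
    refine ⟨monomial e c, 0, isHomogeneous_monomial c ?_, isHomogeneous_zero _ _ _, ?_⟩
    · rw [map_add, Finsupp.degree_single] at hd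
      omega
    · rw [map_zero, add_zero, monomial_single_add, pow_one]

theorem MvPolynomial.IsHomogeneous.exists_eq_X_last_mul_add_rename_s4
    {F : MvPolynomial (Fin (n + 1)) R} (hF : F.IsHomogeneous (k + 1)) :
    ∃ (Q : MvPolynomial (Fin (n + 1)) R) (P : MvPolynomial (Fin n) R),
      Q.IsHomogeneous k ∧ P.IsHomogeneous (k + 1) ∧
        F = X (Fin.last n) * Q + rename Fin.castSucc P := by
  rw [F.as_sum]
  refine Finset.sum_induction _ (fun G => ∃ (Q : MvPolynomial (Fin (n + 1)) R)
    (P : MvPolynomial (Fin n) R), Q.IsHomogeneous k ∧ P.IsHomogeneous (k + 1) ∧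
      G = X (Fin.last n) * Q + rename Fin.castSucc P) ?_ ?_ fun d hd =>
    exists_monomial_eq_X_last_mul_add_rename (hF.degree_eq_sum_deg_support hd).symm _
  · rintro _ _ ⟨Q, P, hQ, hP, rfl⟩ ⟨Q', P', hQ', hP', rfl⟩
    exact ⟨Q + Q', P + P', hQ.add hQ', hP.add hP', by rw [mul_add, map_add]; ring⟩
  · exact ⟨0, 0, isHomogeneous_zero _ _ _, isHomogeneous_zero _ _ _, by simp⟩

end LastVariable

section Induction

variable {n : ℕ} {a : Fin (n + 1) → R}

theorem coeff_mem_span_of_eval_eq_zero (hinit : IsQuasiRegularFamily (Fin.init a))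
    (hlast : IsSMulRegular (R ⧸ span (Set.range (Fin.init a))) (a (Fin.last n))) {k : ℕ}
    (ih : ∀ Q : MvPolynomial (Fin (n + 1)) R, Q.IsHomogeneous k →
      eval a Q ∈ span (Set.range a) ^ (k + 1) → ∀ d, Q.coeff d ∈ span (Set.range a))
    {F : MvPolynomial (Fin (n + 1)) R} (hF : F.IsHomogeneous (k + 1)) (hF0 : eval a F = 0)
    (d : Fin (n + 1) →₀ ℕ) : F.coeff d ∈ span (Set.range a) := by
  set I := span (Set.range a)
  set J := span (Set.range (Fin.init a))
  set y := a (Fin.last n)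
  have hJI : J ≤ I := span_mono (Set.range_comp_subset_range _ _)
  obtain ⟨Q, P, hQ, hP, rfl⟩ := hF.exists_eq_X_last_mul_add_rename_s4
  have hsum : y * eval a Q + eval (Fin.init a) P = 0 := by
    rwa [map_add, map_mul, eval_X, eval_rename] at hF0
  have hPJ : eval (Fin.init a) P ∈ J ^ (k + 1) :=
    (mem_span_pow_iff_exists_isHomogeneous _ _).mpr ⟨P, hP, rfl⟩
  have hQJ : eval a Q ∈ J ^ (k + 1) :=
    mem_of_isSMulRegular_quotient_of_smul_mem (hinit.isSMulRegular_quotient_pow hlast (k + 1))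
      (by rw [smul_eq_mul, eq_neg_of_add_eq_zero_left hsum]; exact neg_mem hPJ)
  have hQI : ∀ d, Q.coeff d ∈ I := ih Q hQ (pow_right_mono hJI _ hQJ)
  obtain ⟨H, hH, hHQ⟩ := (mem_span_pow_iff_exists_isHomogeneous _ _).mp hQJ
  have hW : ∀ d, (P + C y * H).coeff d ∈ J :=
    hinit (k + 1) _ (hP.add (hH.C_mul y))
      (by rw [map_add, map_mul, eval_C, hHQ, add_comm (eval _ P), hsum]; exact zero_mem _)
  have hPI : ∀ d, P.coeff d ∈ I := fun d => by
    have := sub_mem (hJI (hW d)) (I.mul_mem_right (H.coeff d) (subset_span ⟨Fin.last n, rfl⟩))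
    rwa [coeff_add, coeff_C_mul, add_sub_cancel_right] at this
  classical
  rw [coeff_add, coeff_X_mul']
  refine add_mem ?_ (coeff_rename_mem _ hPI d)
  split_ifs
  exacts [hQI _, zero_mem I]

theorem IsQuasiRegularFamily.of_init (hinit : IsQuasiRegularFamily (Fin.init a))
    (hlast : IsSMulRegular (R ⧸ span (Set.range (Fin.init a))) (a (Fin.last n))) :
    IsQuasiRegularFamily a := by
  intro k
  induction k with
  | zero => exact fun F hF h => coeff_mem_of_isHomogeneous_zero a hF (pow_le_self one_ne_zero h)
  | succ k ih =>
    intro F hF hFa d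
    obtain ⟨G, hG, hGI, hGF⟩ :=
      (mem_mul_span_pow_iff_exists_isHomogeneous a _ _ _).mp (by rwa [← pow_succ'])
    have := coeff_mem_span_of_eval_eq_zero hinit hlast ih (hF.sub hG)
      (by rw [map_sub, hGF, sub_self]) d
    rw [coeff_sub] at this
    simpa using add_mem this (hGI d)

end Induction

theorem Ideal.ofList_ofFn_s4 {n : ℕ} (a : Fin n → R) :
    ofList (List.ofFn a) = span (Set.range a) := by
  simp only [Ideal.ofList, List.mem_ofFn]
  rfl

theorem RingTheory.Sequence.isWeaklyRegular_ofFn_succ_iff {n : ℕ} (a : Fin (n + 1) → R) :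
    IsWeaklyRegular R (List.ofFn a) ↔ IsWeaklyRegular R (List.ofFn (Fin.init a)) ∧
      IsSMulRegular (R ⧸ span (Set.range (Fin.init a))) (a (Fin.last n)) := by
  rw [List.ofFn_succ', List.concat_eq_append, isWeaklyRegular_append_iff,
    isWeaklyRegular_singleton_iff, ofList_ofFn_s4, Ideal.smul_eq_mul, mul_top]
  rfl

theorem isQuasiRegularFamily_of_isWeaklyRegular :
    ∀ {n : ℕ} (a : Fin n → R), IsWeaklyRegular R (List.ofFn a) → IsQuasiRegularFamily a
  | 0, a, _ => isQuasiRegularFamily_of_isEmpty a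
  | _ + 1, a, h =>
    let ⟨hinit, hlast⟩ := (isWeaklyRegular_ofFn_succ_iff a).mp h
    .of_init (isQuasiRegularFamily_of_isWeaklyRegular _ hinit) hlast

theorem RingTheory.Sequence.IsWeaklyRegular.isSMulRegular_quotient_ofList_pow {rs : List R}
    (hrs : IsWeaklyRegular R rs) {x : R} (hx : IsSMulRegular (R ⧸ ofList rs) x) (m : ℕ) :
    IsSMulRegular (R ⧸ ofList rs ^ m) x := by
  obtain ⟨n, a, rfl⟩ : ∃ n, ∃ a : Fin n → R, List.ofFn a = rs :=
    ⟨_, _, List.ofFn_get rs⟩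
  rw [ofList_ofFn_s4] at hx ⊢
  exact (isQuasiRegularFamily_of_isWeaklyRegular a hrs).isSMulRegular_quotient_pow hx m

end QuasiRegular

theorem stmt4_general {R : Type*} [CommRing R]
    (I : Ideal R) (hprime : I.IsPrime)
    (as : List R) (hreg : RingTheory.Sequence.IsRegular R as) (hI : I = Ideal.ofList as)
    (e : ℕ) (he : 0 < e) :
    (∀ P ∈ associatedPrimes R (R ⧸ I ^ e), P = I) ∧ (I ^ e).IsPrimary := by
  have hradical : (I ^ e).radical = I := by rw [radical_pow I he.ne', hprime.radical]
  have hpow_regular (y : R) (hy : y ∉ I) : IsSMulRegular (R ⧸ I ^ e) y := by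
    have hy' : IsSMulRegular (R ⧸ I) y := (isSMulRegular_quotient_iff_mem_of_smul_mem _ _).mpr
      fun z hz => (hprime.mem_or_mem hz).resolve_left hy
    subst hI
    exact hreg.toIsWeaklyRegular.isSMulRegular_quotient_ofList_pow hy' e
  have hprimary : (I ^ e).IsPrimary := by
    refine isPrimary_iff.mpr ⟨fun h => hprime.ne_top (eq_top_iff.mpr (h ▸ pow_le_self he.ne')),
      fun {x y} hxy => ?_⟩
    rw [hradical]
    by_cases hy : y ∈ I
    · exact .inr hy
    · exact .inl (mem_of_isSMulRegular_quotient_of_smul_mem (hpow_regular y hy)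
        (by rwa [smul_eq_mul, mul_comm]))
  exact ⟨fun P hP => hradical ▸ IsAssociatedPrime.eq_radical hprimary hP, hprimary⟩

theorem stmt4 {R : Type*} [CommRing R] [IsNoetherianRing R]
    (I : Ideal R) (hprime : I.IsPrime)
    (as : List R) (hreg : RingTheory.Sequence.IsRegular R as) (hI : I = Ideal.ofList as)
    (e : ℕ) (he : 0 < e) :
    (∀ P ∈ associatedPrimes R (R ⧸ I ^ e), P = I) ∧ (I ^ e).IsPrimary :=
  stmt4_general I hprime as hreg hI e he
end

section
/- Let Y = A^n_k be affine n-space over a field k with coordinate hyperplanes T_i = V(y_i). Fix q ≤ n−1, set V = T_1 ∩ ... ∩ T_q and W = T_1 ∩ ... ∩ T_{q+1}. Let f : X → Y be the blowup of Y along W. Then the strict transform of V equals the scheme-theoretic intersection of the strict transforms of T_1, ..., T_q. -/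
/-!
The two ideals agree already before saturating by `S₊`: `(Jq : E^∞) = ∑ᵢ (Ji : E^∞)`.
The inclusion `⊇` is monotonicity. For `⊆`, let `L = (y_1, …, y_q, z_1, …, z_q)`. It contains
the Rees relations, and `y_{q+1}` is a nonzerodivisor modulo the monomial ideal `L`, hence also
modulo `P = L S`. As `Jq ⊆ P` and `y_{q+1} ∈ E`, this gives `(Jq : E^∞) ⊆ P`. Finally `P` lies
in `∑ᵢ (Ji : E^∞)`, since `y_i ∈ Ji` and `z_i E ⊆ Ji` because `y_j z_i = y_i z_j`.
-/

open MvPolynomial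

theorem MvPolynomial.mem_span_X_image_of_mul_X_pow_mem {R σ : Type*} [CommSemiring R] {s : Set σ}
    {v : σ} (hv : v ∉ s) (m : ℕ) (a : MvPolynomial σ R)
    (h : a * X v ^ m ∈ Ideal.span (X '' s : Set (MvPolynomial σ R))) :
    a ∈ Ideal.span (X '' s : Set (MvPolynomial σ R)) := by
  rw [mem_ideal_span_X_image] at h ⊢
  intro μ hμ
  have hcoeff : coeff (μ + Finsupp.single v m) (a * X v ^ m) = coeff μ a := by
    rw [X_pow_eq_monomial, coeff_mul_monomial, mul_one]
  obtain ⟨i, his, hi⟩ := h _ (by rwa [mem_support_iff, hcoeff, ← mem_support_iff])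
  have hiv : v ≠ i := fun h => hv (h ▸ his)
  exact ⟨i, his, by simpa [Finsupp.single_apply, hiv] using hi⟩

theorem Ideal.mem_map_mk_of_mul_pow_mem {R : Type*} [CommRing R] {I L : Ideal R} (hIL : I ≤ L)
    {x : R} (hL : ∀ (m : ℕ) (a : R), a * x ^ m ∈ L → a ∈ L) (m : ℕ) (a : R ⧸ I)
    (h : a * Ideal.Quotient.mk I x ^ m ∈ L.map (Ideal.Quotient.mk I)) :
    a ∈ L.map (Ideal.Quotient.mk I) := by
  obtain ⟨b, rfl⟩ := Ideal.Quotient.mk_surjective a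
  rw [← map_pow, ← map_mul, Ideal.mem_quotient_iff_mem hIL] at h
  exact Ideal.mem_map_of_mem _ (hL m b h)

theorem Ideal.iSup_colon_pow_le_of_mul_pow_mem {R : Type*} [CommSemiring R] {J E P : Ideal R}
    (hJP : J ≤ P) {x : R} (hxE : x ∈ E) (hP : ∀ (m : ℕ) (a : R), a * x ^ m ∈ P → a ∈ P) :
    ⨆ m : ℕ, J.colon (E ^ m : Ideal R) ≤ P :=
  iSup_le fun m a ha =>
    hP m a (hJP (Submodule.mem_colon.mp ha _ (Ideal.pow_mem_pow hxE m)))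

theorem Ideal.mem_colon_span_range_of_mul_eq {S ι : Type*} [CommSemiring S] {y z : ι → S} {i : ι}
    (hyz : ∀ j, y j * z i = y i * z j) :
    z i ∈ (Ideal.span {y i}).colon (Ideal.span (Set.range y) : Set S) := by
  have hle : Ideal.span (Set.range y) ≤ (Ideal.span {y i}).colon {z i} :=
    Ideal.span_le.mpr <| Set.range_subset_iff.mpr fun j => by
      rw [SetLike.mem_coe, Submodule.mem_colon_singleton, smul_eq_mul, hyz j]
      exact Ideal.mul_mem_right _ _ (Ideal.mem_span_singleton_self _)
  refine Submodule.mem_colon.mpr fun e he => ?_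
  rw [smul_eq_mul, mul_comm, ← smul_eq_mul, ← Submodule.mem_colon_singleton]
  exact hle he

theorem Ideal.iSup_colon_pow_span_eq_of_mul_eq {S : Type*} [CommSemiring S] {q : ℕ}
    (y z : Fin (q + 1) → S) (hyz : ∀ i j, y i * z j = y j * z i)
    (hreg : ∀ (m : ℕ) (a : S), a * y (Fin.last q) ^ m ∈
        Ideal.span (Set.range (fun i : Fin q => y i.castSucc) ∪
          Set.range (fun i : Fin q => z i.castSucc)) →
      a ∈ Ideal.span (Set.range (fun i : Fin q => y i.castSucc) ∪
          Set.range (fun i : Fin q => z i.castSucc))) :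
    ⨆ m : ℕ, (Ideal.span (Set.range fun i : Fin q => y i.castSucc)).colon
        (Ideal.span (Set.range y) ^ m : Ideal S) =
      ⨆ i : Fin q, ⨆ m : ℕ, (Ideal.span {y i.castSucc}).colon
        (Ideal.span (Set.range y) ^ m : Ideal S) := by
  apply le_antisymm
  · refine (Ideal.iSup_colon_pow_le_of_mul_pow_mem (Ideal.span_mono Set.subset_union_left)
      (Ideal.subset_span (Set.mem_range_self _)) hreg).trans ?_
    rw [Ideal.span_le, Set.union_subset_iff, Set.range_subset_iff, Set.range_subset_iff]
    constructor
    · intro i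
      refine Submodule.mem_iSup_of_mem i (Submodule.mem_iSup_of_mem 0 ?_)
      rw [pow_zero, Ideal.one_eq_top, Submodule.top_coe, Submodule.colon_univ]
      exact Ideal.mem_span_singleton_self _
    · intro i
      refine Submodule.mem_iSup_of_mem i (Submodule.mem_iSup_of_mem 1 ?_)
      rw [pow_one]
      exact Ideal.mem_colon_span_range_of_mul_eq fun j => hyz j _
  · refine iSup_le fun i => iSup_le fun m => le_iSup_of_le m (Submodule.colon_mono ?_ le_rfl)
    exact Ideal.span_le.mpr (Set.singleton_subset_iff.mpr (Ideal.subset_span ⟨i, rfl⟩))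

section ReesAlgebra

variable {k : Type*} [CommRing k] {n q : ℕ} (hq : q + 1 ≤ n)

/-- The ideal `(y_1, …, y_q, z_1, …, z_q)`. -/
noncomputable def initialVarsIdeal : Ideal (MvPolynomial (Fin n ⊕ Fin (q + 1)) k) :=
  Ideal.span (Set.range (fun i : Fin q => X (.inl (Fin.castLE hq i.castSucc))) ∪
    Set.range (fun i : Fin q => X (.inr i.castSucc)))

theorem span_rees_relations_le_initialVarsIdeal :
    Ideal.span {f | ∃ i j : Fin (q + 1),
        f = X (.inl (Fin.castLE hq i)) * X (.inr j) - X (.inl (Fin.castLE hq j)) * X (.inr i)} ≤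
      initialVarsIdeal (k := k) hq := by
  have hmem : ∀ i : Fin (q + 1), i ≠ Fin.last q →
      X (.inl (Fin.castLE hq i)) ∈ initialVarsIdeal (k := k) hq ∧
        X (.inr i) ∈ initialVarsIdeal (k := k) hq := by
    intro i hi
    obtain ⟨j, rfl⟩ := Fin.exists_castSucc_eq.mpr hi
    exact ⟨Ideal.subset_span (Or.inl ⟨j, rfl⟩), Ideal.subset_span (Or.inr ⟨j, rfl⟩)⟩
  rw [Ideal.span_le]
  rintro _ ⟨i, j, rfl⟩
  by_cases hi : i = Fin.last q
  · by_cases hj : j = Fin.last q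
    · simp [hi, hj]
    · exact sub_mem (Ideal.mul_mem_left _ _ (hmem j hj).2) (Ideal.mul_mem_right _ _ (hmem j hj).1)
  · exact sub_mem (Ideal.mul_mem_right _ _ (hmem i hi).1) (Ideal.mul_mem_left _ _ (hmem i hi).2)

theorem mem_initialVarsIdeal_of_mul_X_last_pow_mem (m : ℕ)
    (a : MvPolynomial (Fin n ⊕ Fin (q + 1)) k)
    (h : a * X (.inl (Fin.castLE hq (Fin.last q))) ^ m ∈ initialVarsIdeal hq) :
    a ∈ initialVarsIdeal hq := by
  have hgens : initialVarsIdeal (k := k) hq =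
      Ideal.span (X '' (Set.range (fun i : Fin q => .inl (Fin.castLE hq i.castSucc)) ∪
        Set.range (fun i : Fin q => .inr i.castSucc))) := by
    rw [Set.image_union, ← Set.range_comp, ← Set.range_comp]
    rfl
  rw [hgens] at h ⊢
  refine mem_span_X_image_of_mul_X_pow_mem ?_ m a h
  rintro (⟨i, hi⟩ | ⟨i, hi⟩)
  · simp only [Sum.inl.injEq, Fin.ext_iff, Fin.val_castLE, Fin.val_castSucc, Fin.val_last] at hi
    exact i.isLt.ne hi
  · exact Sum.inr_ne_inl hi

end ReesAlgebra

theorem stmt9_general {k : Type*} [Field k] (n q : ℕ) (hq : q + 1 ≤ n)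
    -- `S = k[y_1,...,y_n][z_1,...,z_{q+1}] / (y_i z_j - y_j z_i)`, the Rees algebra of
    -- the ideal `(y_1, ..., y_{q+1})` of `𝔸ⁿ_k`
    (y : Fin (q + 1) → MvPolynomial (Fin n ⊕ Fin (q + 1)) k)
    (hy : y = fun i => X (Sum.inl (Fin.castLE hq i)))
    (z : Fin (q + 1) → MvPolynomial (Fin n ⊕ Fin (q + 1)) k)
    (hz : z = fun j => X (Sum.inr j))
    (Rel : Ideal (MvPolynomial (Fin n ⊕ Fin (q + 1)) k))
    (hRel : Rel = Ideal.span {f | ∃ i j : Fin (q + 1), f = y i * z j - y j * z i})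
    -- the exceptional ideal `E`, the irrelevant ideal `S₊`, and the ideals of the total
    -- transforms of `V = T_1 ∩ ... ∩ T_q` and of the `T_i`
    (E splus Jq : Ideal (MvPolynomial (Fin n ⊕ Fin (q + 1)) k ⧸ Rel))
    (Ji : Fin q → Ideal (MvPolynomial (Fin n ⊕ Fin (q + 1)) k ⧸ Rel))
    (hE : E = Ideal.span (Set.range fun i => Ideal.Quotient.mk Rel (y i)))
    (hJq : Jq = Ideal.span (Set.range fun i : Fin q =>
      Ideal.Quotient.mk Rel (y (Fin.castSucc i))))
    (hJi : Ji = fun i : Fin q =>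
      Ideal.span {Ideal.Quotient.mk Rel (y (Fin.castSucc i))}) :
    -- the strict transform `(Jq : E^∞)` of `V` and the intersection (= ideal sum) of the
    -- strict transforms `(Ji : E^∞)` of the `T_i` define the same closed subscheme of
    -- `X = Proj S`, i.e. they have the same `S₊`-saturation
    (⨆ ν : ℕ, (⨆ m : ℕ, Jq.colon (E ^ m : Ideal _)).colon (splus ^ ν : Ideal _)) =
      (⨆ ν : ℕ, (⨆ i : Fin q, ⨆ m : ℕ, (Ji i).colon (E ^ m : Ideal _)).colon (splus ^ ν : Ideal _)) := by
  subst hE hJq hJi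
  have hcross : ∀ i j, Ideal.Quotient.mk Rel (y i) * Ideal.Quotient.mk Rel (z j) =
      Ideal.Quotient.mk Rel (y j) * Ideal.Quotient.mk Rel (z i) := by
    intro i j
    rw [← map_mul, ← map_mul, Ideal.Quotient.eq, hRel]
    exact Ideal.subset_span ⟨i, j, rfl⟩
  have hgens : Ideal.span (Set.range (fun i : Fin q => Ideal.Quotient.mk Rel (y i.castSucc)) ∪
        Set.range (fun i : Fin q => Ideal.Quotient.mk Rel (z i.castSucc))) =
      (Ideal.span (Set.range (fun i : Fin q => y i.castSucc) ∪
        Set.range (fun i : Fin q => z i.castSucc))).map (Ideal.Quotient.mk Rel) := by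
    rw [Ideal.map_span, Set.image_union, ← Set.range_comp, ← Set.range_comp]
    rfl
  refine congrArg (fun I : Ideal (MvPolynomial (Fin n ⊕ Fin (q + 1)) k ⧸ Rel) =>
    ⨆ ν : ℕ, I.colon (splus ^ ν : Ideal _)) ?_
  refine Ideal.iSup_colon_pow_span_eq_of_mul_eq (fun i => Ideal.Quotient.mk Rel (y i))
    (fun j => Ideal.Quotient.mk Rel (z j)) hcross ?_
  rw [hgens]
  subst hy hz
  exact Ideal.mem_map_mk_of_mul_pow_mem (hRel ▸ span_rees_relations_le_initialVarsIdeal hq)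
    (mem_initialVarsIdeal_of_mul_X_last_pow_mem hq)

theorem stmt9 {k : Type*} [Field k] (n q : ℕ) (hq : q + 1 ≤ n)
    -- `S = k[y_1,...,y_n][z_1,...,z_{q+1}] / (y_i z_j - y_j z_i)`, the Rees algebra of
    -- the ideal `(y_1, ..., y_{q+1})` of `𝔸ⁿ_k`
    (y : Fin (q + 1) → MvPolynomial (Fin n ⊕ Fin (q + 1)) k)
    (hy : y = fun i => X (Sum.inl (Fin.castLE hq i)))
    (z : Fin (q + 1) → MvPolynomial (Fin n ⊕ Fin (q + 1)) k)
    (hz : z = fun j => X (Sum.inr j))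
    (Rel : Ideal (MvPolynomial (Fin n ⊕ Fin (q + 1)) k))
    (hRel : Rel = Ideal.span {f | ∃ i j : Fin (q + 1), f = y i * z j - y j * z i})
    -- the exceptional ideal `E`, the irrelevant ideal `S₊`, and the ideals of the total
    -- transforms of `V = T_1 ∩ ... ∩ T_q` and of the `T_i`
    (E splus Jq : Ideal (MvPolynomial (Fin n ⊕ Fin (q + 1)) k ⧸ Rel))
    (Ji : Fin q → Ideal (MvPolynomial (Fin n ⊕ Fin (q + 1)) k ⧸ Rel))
    (hE : E = Ideal.span (Set.range fun i => Ideal.Quotient.mk Rel (y i)))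
    (hsplus : splus = Ideal.span (Set.range fun j => Ideal.Quotient.mk Rel (z j)))
    (hJq : Jq = Ideal.span (Set.range fun i : Fin q =>
      Ideal.Quotient.mk Rel (y (Fin.castSucc i))))
    (hJi : Ji = fun i : Fin q =>
      Ideal.span {Ideal.Quotient.mk Rel (y (Fin.castSucc i))}) :
    -- the strict transform `(Jq : E^∞)` of `V` and the intersection (= ideal sum) of the
    -- strict transforms `(Ji : E^∞)` of the `T_i` define the same closed subscheme of
    -- `X = Proj S`, i.e. they have the same `S₊`-saturation
    (⨆ ν : ℕ, (⨆ m : ℕ, Jq.colon (E ^ m : Ideal _)).colon (splus ^ ν : Ideal _)) =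
      (⨆ ν : ℕ, (⨆ i : Fin q, ⨆ m : ℕ, (Ji i).colon (E ^ m : Ideal _)).colon (splus ^ ν : Ideal _)) :=
  stmt9_general n q hq y hy z hz Rel hRel E splus Jq Ji hE hJq hJi
end

section
/- In the setting of Notation (n-1): the Cartier divisor L = (st−r)f*H + S' on the blowup X of P^n_k along W is nef but not semi-ample, assuming the base locus of |S'| is contained in V' and L|_{V'} ∼ t g*M with M nef and not semi-ample. -/
/-!
STATEMENT 18 (Proposition p-not-sa (3)): In Notation (n-1), the Cartier divisor
`L = (st - r) f^*H + S'` on the blowup `X` of `ℙⁿ_k` along `W` is nef but not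
semi-ample, given that (a) the base locus of `|S'|` is contained in `V'` and (b)
`L|_{V'} ∼ t g^*M` with `M` nef and not semi-ample.

Encoding: Mathlib has no divisor/intersection theory on schemes, so it is axiomatized:
`DivX`/`DivV` are the Cartier divisor groups of `X` and of `V ≅ V'`, with principal
subgroups, `CurX`/`CurV` the sets of integral curves, `interX`/`interV` the intersection
pairings, `GGX`/`GGV` global generation, `Effective` effectivity, `AvoidedBy Γ D`
meaning `Γ ⊄ Supp D`, `onV' Γ` meaning `Γ ⊆ V'`, `push` the identification of curves in
`V'` with curves in `V`, and `ρ : D ↦ g_*(D|_{V'})`; the listed hypotheses are the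
standard properties of these notions together with the givens (a) and (b).  Conclusion:
`L · Γ ≥ 0` for every curve `Γ` on `X`, and no positive multiple of `L` is globally
generated.
-/

theorem stmt18
    (DivX DivV : Type*) [AddCommGroup DivX] [AddCommGroup DivV]
    (CurX CurV : Type*)
    (PrinX : AddSubgroup DivX) (PrinV : AddSubgroup DivV)
    (interX : DivX →+ (CurX → ℤ)) (interV : DivV →+ (CurV → ℤ))
    -- intersection numbers only depend on linear equivalence classes
    (interX_prin : ∀ D ∈ PrinX, interX D = 0)
    (interV_prin : ∀ D ∈ PrinV, interV D = 0)
    (GGX : DivX → Prop) (GGV : DivV → Prop)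
    (GGV_congr : ∀ D D', D - D' ∈ PrinV → GGV D → GGV D')
    (Effective : DivX → Prop) (AvoidedBy : CurX → DivX → Prop)
    -- an effective divisor meets a curve not contained in it nonnegatively
    (inter_nonneg : ∀ D Γ, Effective D → AvoidedBy Γ D → 0 ≤ interX D Γ)
    (onV' : CurX → Prop) (push : {Γ : CurX // onV' Γ} → CurV)
    (ρ : DivX →+ DivV)   -- `D ↦ g_*(D|_{V'})`
    -- projection formula: for a curve `Γ ⊆ V'`, `D · Γ` computed on `X` or on `V` agree
    (inter_push : ∀ D (Γ : {Γ : CurX // onV' Γ}), interX D Γ.1 = interV (ρ D) (push Γ))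
    -- a globally generated divisor restricts to a globally generated divisor
    (GG_restrict : ∀ D, GGX D → GGV (ρ D))
    (fH S' L : DivX) (M : DivV)
    (s t r : ℤ) (hs : 0 < s) (ht : 0 < t) (hr : 0 < r) (hstr : r < s * t)
    (hL : L = (s * t - r) • fH + S')
    -- `f^*H` is nef
    (hfH_nef : ∀ Γ, 0 ≤ interX fH Γ)
    -- (a) the base locus of `|S'|` is contained in `V'`: every curve not contained in
    -- `V'` is avoided by some effective member of `|S'|`
    (hbase : ∀ Γ, ¬ onV' Γ → ∃ D, D - S' ∈ PrinX ∧ Effective D ∧ AvoidedBy Γ D)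
    -- (b) `L|_{V'} ∼ t g^*M` ...
    (hρL : ρ L - t • M ∈ PrinV)
    -- ... with `M` nef and not semi-ample
    (hM_nef : ∀ C, 0 ≤ interV M C)
    (hM_not_sa : ¬ ∃ n : ℕ, 0 < n ∧ GGV (n • M)) :
    -- `L` is nef but not semi-ample
    (∀ Γ, 0 ≤ interX L Γ) ∧ ¬ ∃ n : ℕ, 0 < n ∧ GGX (n • L) := by
  have hρL_eq : interV (ρ L) = interV (t • M) := by
    have h := interV_prin _ hρL
    have h2 : interV (ρ L) - interV (t • M) = 0 := by
      rw [← map_sub]; exact h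
    exact sub_eq_zero.mp h2
  constructor
  · intro Γ
    by_cases hΓ : onV' Γ
    · have h1 : interX L Γ = interV (ρ L) (push ⟨Γ, hΓ⟩) := inter_push L ⟨Γ, hΓ⟩
      rw [h1, hρL_eq, map_zsmul]
      have := hM_nef (push ⟨Γ, hΓ⟩)
      simpa using mul_nonneg ht.le this
    · obtain ⟨D, hDS, hDeff, hDav⟩ := hbase Γ hΓ
      have hD : interX D = interX S' := by
        have h := interX_prin _ hDS
        have : interX D - interX S' = 0 := by rw [← map_sub]; exact h
        exact sub_eq_zero.mp this
      have hS' : 0 ≤ interX S' Γ := by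
        rw [← hD]; exact inter_nonneg D Γ hDeff hDav
      have hfh := hfH_nef Γ
      rw [hL, map_add, map_zsmul]
      have : (0:ℤ) ≤ (s * t - r) * interX fH Γ := by
        apply mul_nonneg (by linarith) hfh
      simp only [Pi.add_apply, Pi.smul_apply, smul_eq_mul]
      linarith
  · rintro ⟨n, hn, hGG⟩
    have hGGρ : GGV (ρ ((n : ℕ) • L)) := GG_restrict _ hGG
    have hρnL : ρ ((n : ℕ) • L) = (n : ℤ) • ρ L := by
      rw [map_nsmul, ← Nat.cast_smul_eq_nsmul ℤ]
    have hmem : (n : ℤ) • ρ L - ((n : ℤ) * t) • M ∈ PrinV := by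
      have : (n : ℤ) • ρ L - ((n : ℤ) * t) • M = (n : ℤ) • (ρ L - t • M) := by
        rw [smul_sub, mul_smul]
      rw [this]
      exact AddSubgroup.zsmul_mem PrinV hρL _
    have hGG2 : GGV (((n : ℤ) * t) • M) := by
      apply GGV_congr _ _ _ hGGρ
      rw [hρnL]; exact hmem
    have hpos : 0 < (n : ℤ) * t := by positivity
    refine hM_not_sa ⟨((n : ℤ) * t).toNat, ?_, ?_⟩
    · omega
    · have : (((n : ℤ) * t).toNat : ℤ) = (n : ℤ) * t := Int.toNat_of_nonneg hpos.le
      rwa [← Nat.cast_smul_eq_nsmul ℤ, this]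
end
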